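/- arXiv:1909.04858 — 3 statements merged into one kernel-verified Lean document; each statement's English description precedes it below -/
import Mathlib

section
/- φ̃-increment from an irregular block: Let ε > 0 and let B be a d-dimensional matrix of order n over a finite alphabet Σ that is ε-irregular. Then there exists a block partition 𝓒 = {C_γ} of B into 2^d blocks (a 2 × … × 2 grid of blocks, some possibly empty), all designated ordinary, such that φ̃(𝓒) ≥ φ̄(B) + ε^{d+2}·|B|, where φ̄(B) = Σ_{σ∈Σ} ρ_σ(B)²·|B|. -/
/-
STATEMENT 3: φ̃-increment from an irregular block: if ε > 0 and B is an ε-irregular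
d-dimensional matrix of order n over a finite alphabet, then there is a block partition
𝓒 of B into 2^d blocks (a 2 × … × 2 grid, some blocks possibly empty), all ordinary,
with φ̃(𝓒) ≥ φ̄(B) + ε^{d+2}·|B|, where φ̄(B) = Σ_σ ρ_σ(B)²·|B|.
-/

open Finset

noncomputable section

/-- The weight `w_σ(B)` of the symbol `σ` in the block of `A` indexed by `S_1 × … × S_d`. -/
def blockWeight {d n : ℕ} {T : Type*} [DecidableEq T]
    (A : (Fin d → Fin n) → T) (S : Fin d → Finset (Fin n)) (σ : T) : ℕ :=
  (Finset.univ.filter fun α : Fin d → Fin n => (∀ i, α i ∈ S i) ∧ A α = σ).card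

/-- The volume (number of entries) of the block indexed by `S_1 × … × S_d`. -/
def blockVol {d n : ℕ} (S : Fin d → Finset (Fin n)) : ℕ := ∏ i, (S i).card

/-- The density `ρ_σ(B)` of the symbol `σ` in the block of `A` indexed by `S_1 × … × S_d`. -/
def blockDensity {d n : ℕ} {T : Type*} [DecidableEq T]
    (A : (Fin d → Fin n) → T) (S : Fin d → Finset (Fin n)) (σ : T) : ℝ :=
  (blockWeight A S σ : ℝ) / (blockVol S : ℝ)

/-- The block of `A` indexed by `S_1 × … × S_d` is `ε`-regular if for every symbol `σ`
and every sub-block `U_1 × … × U_d` with `U_i ⊆ S_i` and `|U_i| ≥ ε·|S_i|` for all `i`,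
`|ρ_σ(U) − ρ_σ(S)| ≤ ε`.  Applied with `S i = univ`, this says that the matrix `A`
itself is `ε`-regular. -/
def IsRegularBlock {d n : ℕ} {T : Type*} [DecidableEq T] (ε : ℝ)
    (A : (Fin d → Fin n) → T) (S : Fin d → Finset (Fin n)) : Prop :=
  ∀ (σ : T) (U : Fin d → Finset (Fin n)), (∀ i, U i ⊆ S i) →
    (∀ i, ε * ((S i).card : ℝ) ≤ ((U i).card : ℝ)) →
    |blockDensity A U σ - blockDensity A S σ| ≤ ε

/-- The block of a product partition indexed by `β`: the partition of the index set of
each direction `i` is encoded by the labelling map `p i`. -/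
def partBlock {d n : ℕ} {t : Fin d → ℕ}
    (p : ∀ i, Fin n → Fin (t i)) (β : ∀ i, Fin (t i)) : Fin d → Finset (Fin n) :=
  fun i => Finset.univ.filter fun x => p i x = β i

/- ### Auxiliary lemmas -/

lemma blockVol_eq_card {d n : ℕ} (S : Fin d → Finset (Fin n)) :
    blockVol S = (Finset.univ.filter fun α : Fin d → Fin n => ∀ i, α i ∈ S i).card := by
  have h : (Finset.univ.filter fun α : Fin d → Fin n => ∀ i, α i ∈ S i)
      = Fintype.piFinset S := by
    ext α; simp [Fintype.mem_piFinset]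
  rw [h, Fintype.card_piFinset, blockVol]

lemma blockWeight_le_blockVol {d n : ℕ} {T : Type*} [DecidableEq T]
    (A : (Fin d → Fin n) → T) (S : Fin d → Finset (Fin n)) (σ : T) :
    blockWeight A S σ ≤ blockVol S := by
  rw [blockWeight, blockVol_eq_card]
  exact Finset.card_le_card (fun x hx => by
    simp only [Finset.mem_filter] at hx ⊢; exact ⟨hx.1, hx.2.1⟩)

lemma mem_partBlock_iff {d n : ℕ} (p : Fin d → Fin n → Fin 2) (γ : Fin d → Fin 2)
    (α : Fin d → Fin n) : (∀ i, α i ∈ partBlock p γ i) ↔ (fun i => p i (α i)) = γ := by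
  simp [partBlock, funext_iff]

lemma sum_blockVol {d n : ℕ} (p : Fin d → Fin n → Fin 2) :
    ∑ γ : Fin d → Fin 2, blockVol (partBlock p γ) = n ^ d := by
  have h := Finset.card_eq_sum_card_fiberwise
    (f := fun α : Fin d → Fin n => fun i => p i (α i)) (s := Finset.univ) (t := Finset.univ)
    (fun x _ => Finset.mem_univ _)
  have hc : (Finset.univ : Finset (Fin d → Fin n)).card = n ^ d := by
    simp [Finset.card_univ]
  rw [hc] at h
  rw [h]
  refine Finset.sum_congr rfl fun γ _ => ?_
  rw [blockVol_eq_card]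
  congr 1
  ext α
  simp [mem_partBlock_iff]

lemma sum_blockWeight {d n : ℕ} {T : Type*} [DecidableEq T]
    (A : (Fin d → Fin n) → T) (p : Fin d → Fin n → Fin 2) (σ : T) :
    ∑ γ : Fin d → Fin 2, blockWeight A (partBlock p γ) σ
      = blockWeight A (fun _ => (Finset.univ : Finset (Fin n))) σ := by
  have h := Finset.card_eq_sum_card_fiberwise
    (f := fun α : Fin d → Fin n => fun i => p i (α i))
    (s := Finset.univ.filter fun α => A α = σ) (t := Finset.univ)
    (fun x _ => Finset.mem_univ _)
  have h2 : blockWeight A (fun _ => (Finset.univ : Finset (Fin n))) σ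
      = (Finset.univ.filter fun α : Fin d → Fin n => A α = σ).card := by
    rw [blockWeight]; congr 1; ext α; simp
  rw [h2, h]
  refine Finset.sum_congr rfl fun γ _ => ?_
  rw [blockWeight]
  congr 1
  rw [Finset.filter_filter]
  ext α
  simp only [Finset.mem_filter, Finset.mem_univ, true_and, mem_partBlock_iff]
  tauto

/-- The defect form of the energy (Cauchy–Schwarz) inequality: refining a block can only
increase the energy, and by at least the contribution of one designated sub-block. -/
lemma energy_lemma {ι : Type*} [Fintype ι] (v w : ι → ℝ) (γ0 : ι)
    (hv : ∀ γ, 0 ≤ v γ) (hw0 : ∀ γ, v γ = 0 → w γ = 0)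
    (hV : 0 < ∑ γ, v γ) :
    ((∑ γ, w γ) / (∑ γ, v γ)) ^ 2 * (∑ γ, v γ)
      + v γ0 * (w γ0 / v γ0 - (∑ γ, w γ) / (∑ γ, v γ)) ^ 2
      ≤ ∑ γ, (w γ / v γ) ^ 2 * v γ := by
  set V := ∑ γ, v γ with hVdef
  set W := ∑ γ, w γ with hWdef
  set ρ := W / V with hρ
  have hVne : V ≠ 0 := hV.ne'
  have key : ∀ γ, (w γ / v γ) ^ 2 * v γ
      = v γ * (w γ / v γ - ρ) ^ 2 + (2 * ρ * w γ - ρ ^ 2 * v γ) := by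
    intro γ
    rcases (hv γ).eq_or_lt with h | h
    · simp [← h, hw0 γ h.symm]
    · have hne : v γ ≠ 0 := h.ne'
      field_simp
      ring
  have hsum : ∑ γ, (w γ / v γ) ^ 2 * v γ
      = (∑ γ, v γ * (w γ / v γ - ρ) ^ 2) + (2 * ρ * W - ρ ^ 2 * V) := by
    rw [Finset.sum_congr rfl fun γ _ => key γ, Finset.sum_add_distrib]
    congr 1
    rw [Finset.sum_sub_distrib, ← Finset.mul_sum, ← Finset.mul_sum, hVdef, hWdef]
  have h2 : 2 * ρ * W - ρ ^ 2 * V = ρ ^ 2 * V := by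
    rw [hρ]; field_simp; ring
  rw [hsum, h2]
  have hone : v γ0 * (w γ0 / v γ0 - ρ) ^ 2 ≤ ∑ γ, v γ * (w γ / v γ - ρ) ^ 2 :=
    Finset.single_le_sum (f := fun γ => v γ * (w γ / v γ - ρ) ^ 2)
      (fun γ _ => mul_nonneg (hv γ) (sq_nonneg _)) (Finset.mem_univ γ0)
  linarith

/-- **φ̃-increment from an irregular block.**  Let `ε > 0` and let `B` be a
`d`-dimensional matrix of order `n` over a finite alphabet that is `ε`-irregular.
Then there is a block partition of `B` into a `2 × … × 2` grid of `2^d` blocks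
(encoded by the labelling maps `p i : Fin n → Fin 2`), all designated ordinary, such
that `φ̃(𝓒) = Σ_γ Σ_σ ρ_σ(C_γ)²·|C_γ|` is at least `φ̄(B) + ε^{d+2}·|B|`, where
`φ̄(B) = Σ_σ ρ_σ(B)²·|B|` and `|B| = n^d`. -/
theorem phiTilde_increment_of_irregular {d n : ℕ} {T : Type*} [DecidableEq T] [Fintype T]
    (ε : ℝ) (hε : 0 < ε) (B : (Fin d → Fin n) → T)
    (hirr : ¬ IsRegularBlock ε B (fun _ => (Finset.univ : Finset (Fin n)))) :
    ∃ p : Fin d → Fin n → Fin 2,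
      (∑ σ : T, (blockDensity B (fun _ => (Finset.univ : Finset (Fin n))) σ) ^ 2 * (n : ℝ) ^ d)
          + ε ^ (d + 2) * (n : ℝ) ^ d ≤
        ∑ γ : Fin d → Fin 2, ∑ σ : T,
          (blockDensity B (partBlock p γ) σ) ^ 2 * (blockVol (partBlock p γ) : ℝ) := by
  classical
  rw [IsRegularBlock] at hirr
  push_neg at hirr
  obtain ⟨σ0, U, hUsub, hUcard, hdev⟩ := hirr
  have hUcard' : ∀ i, ε * (n : ℝ) ≤ ((U i).card : ℝ) := fun i => by simpa using hUcard i
  -- `d ≠ 0`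
  have hd : d ≠ 0 := by
    intro hd; subst hd
    have hU : U = fun _ => (Finset.univ : Finset (Fin n)) := funext fun i => i.elim0
    rw [hU, sub_self, abs_zero] at hdev
    exact absurd hdev (not_lt.2 hε.le)
  -- `n ≠ 0`
  have hn : 0 < n := by
    rcases Nat.eq_zero_or_pos n with h | h
    · exfalso; subst h
      have i0 : Fin d := ⟨0, Nat.pos_of_ne_zero hd⟩
      have hv1 : blockVol U = 0 :=
        Finset.prod_eq_zero (Finset.mem_univ i0)
          (by simp; exact Finset.eq_empty_of_isEmpty _)
      have hv2 : blockVol (fun _ : Fin d => (Finset.univ : Finset (Fin 0))) = 0 :=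
        Finset.prod_eq_zero (Finset.mem_univ i0) (by simp)
      rw [blockDensity, blockDensity, hv1, hv2] at hdev
      norm_num at hdev
      exact absurd hdev (not_lt.2 hε.le)
    · exact h
  have hnR : (0 : ℝ) < (n : ℝ) ^ d := by positivity
  -- the bipartition
  set p : Fin d → Fin n → Fin 2 := fun i x => if x ∈ U i then 0 else 1 with hp
  refine ⟨p, ?_⟩
  set γ0 : Fin d → Fin 2 := fun _ => 0 with hγ0
  have hblock : partBlock p γ0 = U := by
    funext i
    ext x
    simp only [partBlock, Finset.mem_filter, Finset.mem_univ, true_and, hp, hγ0]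
    by_cases h : x ∈ U i <;> simp [h]
  -- cast sums
  have hVsum : ∑ γ : Fin d → Fin 2, ((blockVol (partBlock p γ) : ℕ) : ℝ) = (n : ℝ) ^ d := by
    rw [← Nat.cast_sum, sum_blockVol, Nat.cast_pow]
  have hWsum : ∀ σ : T, ∑ γ : Fin d → Fin 2, ((blockWeight B (partBlock p γ) σ : ℕ) : ℝ)
      = (blockWeight B (fun _ => (Finset.univ : Finset (Fin n))) σ : ℝ) := fun σ => by
    rw [← Nat.cast_sum, sum_blockWeight]
  have hvolSu : ((blockVol (fun _ : Fin d => (Finset.univ : Finset (Fin n))) : ℕ) : ℝ)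
      = (n : ℝ) ^ d := by
    simp [blockVol]
  -- deviation
  set Δ : ℝ := blockDensity B U σ0
      - blockDensity B (fun _ => (Finset.univ : Finset (Fin n))) σ0 with hΔdef
  -- key per-symbol inequality
  have key : ∀ σ : T,
      (blockDensity B (fun _ => (Finset.univ : Finset (Fin n))) σ) ^ 2 * (n : ℝ) ^ d
        + (if σ = σ0 then ((blockVol U : ℕ) : ℝ) * Δ ^ 2 else 0)
      ≤ ∑ γ : Fin d → Fin 2,
          (blockDensity B (partBlock p γ) σ) ^ 2 * ((blockVol (partBlock p γ) : ℕ) : ℝ) := by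
    intro σ
    have hE := energy_lemma (fun γ : Fin d → Fin 2 => ((blockVol (partBlock p γ) : ℕ) : ℝ))
        (fun γ => ((blockWeight B (partBlock p γ) σ : ℕ) : ℝ)) γ0
        (fun γ => by positivity)
        (fun γ h => by
          have h' : ((blockVol (partBlock p γ) : ℕ) : ℝ) = 0 := h
          have hle := blockWeight_le_blockVol B (partBlock p γ) σ
          have hz : blockVol (partBlock p γ) = 0 := by exact_mod_cast h'
          have hw : blockWeight B (partBlock p γ) σ = 0 :=
            Nat.le_zero.mp (hz ▸ hle)
          show ((blockWeight B (partBlock p γ) σ : ℕ) : ℝ) = 0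
          exact_mod_cast hw)
        (by rw [hVsum]; exact hnR)
    rw [hVsum, hWsum σ] at hE
    have hρSu : blockDensity B (fun _ => (Finset.univ : Finset (Fin n))) σ
        = (blockWeight B (fun _ => (Finset.univ : Finset (Fin n))) σ : ℝ) / (n : ℝ) ^ d := by
      rw [blockDensity, hvolSu]
    have hργ : ∀ γ : Fin d → Fin 2, blockDensity B (partBlock p γ) σ
        = ((blockWeight B (partBlock p γ) σ : ℕ) : ℝ) / ((blockVol (partBlock p γ) : ℕ) : ℝ) :=
      fun γ => rfl
    rw [hρSu]
    simp only [hργ]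
    by_cases hσ : σ = σ0
    · subst hσ
      rw [if_pos rfl]
      have hγ0term : ((blockVol (partBlock p γ0) : ℕ) : ℝ)
          * (((blockWeight B (partBlock p γ0) σ : ℕ) : ℝ) / ((blockVol (partBlock p γ0) : ℕ) : ℝ)
              - (blockWeight B (fun _ => (Finset.univ : Finset (Fin n))) σ : ℝ) / (n : ℝ) ^ d) ^ 2
          = ((blockVol U : ℕ) : ℝ) * Δ ^ 2 := by
        rw [hΔdef, hρSu, blockDensity, ← hblock]
      rw [← hγ0term]
      exact hE
    · rw [if_neg hσ, add_zero]
      have h2 : 0 ≤ ((blockVol (partBlock p γ0) : ℕ) : ℝ)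
          * (((blockWeight B (partBlock p γ0) σ : ℕ) : ℝ) / ((blockVol (partBlock p γ0) : ℕ) : ℝ)
              - (blockWeight B (fun _ => (Finset.univ : Finset (Fin n))) σ : ℝ) / (n : ℝ) ^ d) ^ 2 := by
        positivity
      linarith
  -- the increment bound
  have hvolU : ε ^ d * (n : ℝ) ^ d ≤ ((blockVol U : ℕ) : ℝ) := by
    have h1 : ((blockVol U : ℕ) : ℝ) = ∏ i : Fin d, ((U i).card : ℝ) := by
      rw [blockVol]; push_cast; rfl
    rw [h1]
    calc ε ^ d * (n : ℝ) ^ d = ∏ _i : Fin d, (ε * (n : ℝ)) := by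
          rw [Finset.prod_const, Finset.card_univ, Fintype.card_fin, mul_pow]
      _ ≤ ∏ i : Fin d, ((U i).card : ℝ) :=
          Finset.prod_le_prod (fun i _ => by positivity) (fun i _ => hUcard' i)
  have hΔ2 : ε ^ 2 ≤ Δ ^ 2 := by
    calc ε ^ 2 ≤ |Δ| ^ 2 := pow_le_pow_left₀ hε.le hdev.le 2
      _ = Δ ^ 2 := sq_abs Δ
  have hinc : ε ^ (d + 2) * (n : ℝ) ^ d ≤ ((blockVol U : ℕ) : ℝ) * Δ ^ 2 := by
    calc ε ^ (d + 2) * (n : ℝ) ^ d = (ε ^ d * (n : ℝ) ^ d) * ε ^ 2 := by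
          rw [pow_add]; ring
      _ ≤ ((blockVol U : ℕ) : ℝ) * ε ^ 2 :=
          mul_le_mul_of_nonneg_right hvolU (sq_nonneg ε)
      _ ≤ ((blockVol U : ℕ) : ℝ) * Δ ^ 2 :=
          mul_le_mul_of_nonneg_left hΔ2 (by positivity)
  -- assemble
  calc (∑ σ : T, (blockDensity B (fun _ => (Finset.univ : Finset (Fin n))) σ) ^ 2 * (n : ℝ) ^ d)
        + ε ^ (d + 2) * (n : ℝ) ^ d
      ≤ ∑ σ : T, ((blockDensity B (fun _ => (Finset.univ : Finset (Fin n))) σ) ^ 2 * (n : ℝ) ^ d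
          + (if σ = σ0 then ((blockVol U : ℕ) : ℝ) * Δ ^ 2 else 0)) := by
        rw [Finset.sum_add_distrib, Finset.sum_ite_eq' Finset.univ σ0
          (fun _ => ((blockVol U : ℕ) : ℝ) * Δ ^ 2), if_pos (Finset.mem_univ σ0)]
        linarith
    _ ≤ ∑ σ : T, ∑ γ : Fin d → Fin 2,
          (blockDensity B (partBlock p γ) σ) ^ 2 * ((blockVol (partBlock p γ) : ℕ) : ℝ) :=
        Finset.sum_le_sum fun σ _ => key σ
    _ = ∑ γ : Fin d → Fin 2, ∑ σ : T,
          (blockDensity B (partBlock p γ) σ) ^ 2 * ((blockVol (partBlock p γ) : ℕ) : ℝ) :=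
        Finset.sum_comm
end
end

section
/- Counting lemma for 2-dimensional matrices: For any δ > 0, any integers t, s ≥ 1, any finite alphabet Σ, any t × s matrix C = (c_{i,j}) over Σ, and any reals ρ_{i,j} ∈ (0,1] (1 ≤ i ≤ t, 1 ≤ j ≤ s), there exists ε > 0 such that the following holds. Let A be a 2-dimensional matrix over Σ whose rows are partitioned into sets R_1,…,R_t with |R_i| = m_i and whose columns are partitioned into sets S_1,…,S_s with |S_j| = n_j, and suppose that every block B_{i,j} = R_i × S_j of A is ε-regular and has density of the symbol c_{i,j} equal to ρ_{i,j}. Then the number of tuples (r_1,…,r_t, s_1,…,s_s) with r_i ∈ R_i, s_j ∈ S_j, and a_{r_i, s_j} = c_{i,j} for all i, j is at least (1 − δ) · ∏_{i=1}^t m_i · ∏_{j=1}^s n_j · ∏_{i=1}^t ∏_{j=1}^s ρ_{i,j}. -/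
/-
STATEMENT 6: Counting lemma for 2-dimensional matrices: for any δ > 0, t, s ≥ 1, finite
alphabet Σ, t × s matrix C over Σ and densities ρ_{i,j} ∈ (0,1], there is ε > 0 such
that: whenever the rows of a matrix A are partitioned into R_1,…,R_t and its columns
into S_1,…,S_s and every block R_i × S_j is ε-regular with density of c_{i,j} equal to
ρ_{i,j}, the number of aligned appearances of C in A is at least
(1 − δ)·∏ m_i·∏ n_j·∏∏ ρ_{i,j}.
-/

open Finset

noncomputable section

/-- The weight of the symbol `σ` in the block `S₁ × S₂` of the 2-dimensional matrix `A`. -/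
def blockWeight2 {m n : ℕ} {T : Type*} [DecidableEq T] (A : Fin m → Fin n → T)
    (S1 : Finset (Fin m)) (S2 : Finset (Fin n)) (σ : T) : ℕ :=
  ((S1 ×ˢ S2).filter fun q => A q.1 q.2 = σ).card

/-- The density `ρ_σ` of the symbol `σ` in the block `S₁ × S₂` of `A`. -/
def blockDensity2 {m n : ℕ} {T : Type*} [DecidableEq T] (A : Fin m → Fin n → T)
    (S1 : Finset (Fin m)) (S2 : Finset (Fin n)) (σ : T) : ℝ :=
  (blockWeight2 A S1 S2 σ : ℝ) / ((S1.card : ℝ) * (S2.card : ℝ))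

/-- The block `S₁ × S₂` of `A` is `ε`-regular if for every symbol `σ` and every
sub-block `T₁ × T₂` with `T₁ ⊆ S₁`, `T₂ ⊆ S₂`, `|T₁| ≥ ε·|S₁|` and `|T₂| ≥ ε·|S₂|`,
one has `|ρ_σ(T₁ × T₂) − ρ_σ(S₁ × S₂)| ≤ ε`.  Applied with `S₁ = S₂ = univ`, this says
that the matrix `A` itself is `ε`-regular. -/
def IsRegularBlock2 {m n : ℕ} {T : Type*} [DecidableEq T] (ε : ℝ)
    (A : Fin m → Fin n → T) (S1 : Finset (Fin m)) (S2 : Finset (Fin n)) : Prop :=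
  ∀ (σ : T) (T1 : Finset (Fin m)) (T2 : Finset (Fin n)), T1 ⊆ S1 → T2 ⊆ S2 →
    ε * (S1.card : ℝ) ≤ (T1.card : ℝ) → ε * (S2.card : ℝ) ≤ (T2.card : ℝ) →
    |blockDensity2 A T1 T2 σ - blockDensity2 A S1 S2 σ| ≤ ε

/-!
The rows are chosen one class at a time, keeping for every column class `j` the set `Y j ⊆ S j`
of columns that still match the rows chosen so far. While `|Y j| ≥ ε |S j|`, regularity of
`R i × S j` leaves at most `ε |R i|` rows of `R i` that meet `C i j` in less than a
`(ρ i j - ε)`-fraction of `Y j`, so at least `(1 - s ε) |R i|` rows shrink every `Y j` by no more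
than that factor. Induction over the row classes yields at least
`(1 - s ε)^t ∏ |R i| ∏ⱼ (∏ᵢ (ρ i j - ε)) |S j|` appearances, and this bound tends to
`∏ |R i| ∏ |S j| ∏ ρ i j` as `ε → 0`.
-/

open Filter Topology

section Counting

variable {M N : ℕ} {T : Type*} [DecidableEq T]

def matchingCols (A : Fin M → Fin N → T) (Y : Finset (Fin N)) {t : ℕ} (r : Fin t → Fin M)
    (c : Fin t → T) : Finset (Fin N) :=
  Y.filter fun y => ∀ i, A (r i) y = c i

lemma matchingCols_cons (A : Fin M → Fin N → T) (Y : Finset (Fin N)) {t : ℕ} (x : Fin M)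
    (r : Fin t → Fin M) (c : Fin (t + 1) → T) :
    matchingCols A Y (Fin.cons x r) c
      = matchingCols A (Y.filter fun y => A x y = c 0) r (Fin.tail c) := by
  simp only [matchingCols, filter_filter, Fin.forall_fin_succ, Fin.cons_zero, Fin.cons_succ]
  rfl

lemma blockWeight2_eq_sum (A : Fin M → Fin N → T) (S1 : Finset (Fin M)) (S2 : Finset (Fin N))
    (σ : T) : blockWeight2 A S1 S2 σ = ∑ x ∈ S1, (S2.filter fun y => A x y = σ).card := by
  rw [blockWeight2, card_filter, sum_product]
  exact sum_congr rfl fun x _ => (card_filter _ _).symm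

lemma IsRegularBlock2.card_sparseRows_le {ε ρ : ℝ} (hε : 0 ≤ ε) {A : Fin M → Fin N → T}
    {S1 : Finset (Fin M)} {S2 Y : Finset (Fin N)} {σ : T} (hreg : IsRegularBlock2 ε A S1 S2)
    (hρ : ρ ≤ blockDensity2 A S1 S2 σ) (hY : Y ⊆ S2) (hYcard : ε * S2.card ≤ Y.card) :
    ((S1.filter fun x => ((Y.filter fun y => A x y = σ).card : ℝ) < (ρ - ε) * Y.card).card : ℝ)
      ≤ ε * S1.card := by
  set Bad := S1.filter fun x => ((Y.filter fun y => A x y = σ).card : ℝ) < (ρ - ε) * Y.card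
  by_contra! hBad
  obtain ⟨x, hx⟩ : Bad.Nonempty :=
    card_pos.mp (by exact_mod_cast (by positivity : 0 ≤ ε * S1.card).trans_lt hBad)
  have hYpos : (0 : ℝ) < Y.card := Nat.cast_pos.mpr <| card_pos.mpr <|
    nonempty_iff_ne_empty.mpr fun hY0 => by simp [Bad, hY0] at hx
  have hsparse : blockDensity2 A Bad Y σ < ρ - ε := by
    have hBadpos : 0 < (Bad.card : ℝ) := by exact_mod_cast card_pos.mpr ⟨x, hx⟩
    rw [blockDensity2, div_lt_iff₀ (mul_pos hBadpos hYpos), blockWeight2_eq_sum]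
    push_cast
    calc ∑ x ∈ Bad, ((Y.filter fun y => A x y = σ).card : ℝ)
        < ∑ _x ∈ Bad, (ρ - ε) * Y.card :=
          sum_lt_sum_of_nonempty ⟨x, hx⟩ fun x hx => (mem_filter.mp hx).2
      _ = (ρ - ε) * (Bad.card * Y.card) := by rw [sum_const, nsmul_eq_mul]; ring
  have hclose := abs_le.mp (hreg σ Bad Y (filter_subset _ _) hY hBad.le hYcard)
  linarith [hclose.1]

lemma card_denseRows_ge {ε : ℝ} (hε : 0 ≤ ε) {A : Fin M → Fin N → T} {R : Finset (Fin M)}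
    {s : ℕ} {S Y : Fin s → Finset (Fin N)} {c : Fin s → T} {ρ : Fin s → ℝ}
    (hreg : ∀ j, IsRegularBlock2 ε A R (S j)) (hρ : ∀ j, ρ j ≤ blockDensity2 A R (S j) (c j))
    (hY : ∀ j, Y j ⊆ S j) (hYcard : ∀ j, ε * (S j).card ≤ (Y j).card) :
    (1 - s * ε) * R.card ≤
      ((R.filter fun x => ∀ j,
        (ρ j - ε) * (Y j).card ≤ ((Y j).filter fun y => A x y = c j).card).card : ℝ) := by
  set Dense := R.filter fun x => ∀ j,
    (ρ j - ε) * (Y j).card ≤ ((Y j).filter fun y => A x y = c j).card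
  have hsparse : R \ Dense ⊆ univ.biUnion fun j =>
      R.filter fun x => ((Y j).filter fun y => A x y = c j).card < (ρ j - ε) * (Y j).card := by
    intro x hx
    obtain ⟨hxR, hxD⟩ := mem_sdiff.mp hx
    obtain ⟨j, hj⟩ : ∃ j, _ := by simpa [Dense, hxR] using hxD
    exact mem_biUnion.mpr ⟨j, mem_univ _, mem_filter.mpr ⟨hxR, hj⟩⟩
  have hcard : ((R \ Dense).card : ℝ) ≤ s * (ε * R.card) :=
    calc ((R \ Dense).card : ℝ)
        ≤ ∑ j : Fin s, ((R.filter fun x =>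
            ((Y j).filter fun y => A x y = c j).card < (ρ j - ε) * (Y j).card).card : ℝ) := by
          exact_mod_cast (card_le_card hsparse).trans card_biUnion_le
      _ ≤ ∑ _j : Fin s, ε * R.card :=
          sum_le_sum fun j _ => (hreg j).card_sparseRows_le hε (hρ j) (hY j) (hYcard j)
      _ = s * (ε * R.card) := by simp
  rw [card_sdiff_of_subset (filter_subset _ _), Nat.cast_sub (card_le_card (filter_subset _ _))]
    at hcard
  linarith

lemma sum_piFinset_cons {γ β : Type*} [AddCommMonoid β] {t : ℕ} (R : Fin (t + 1) → Finset γ)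
    (f : (Fin (t + 1) → γ) → β) :
    ∑ r ∈ Fintype.piFinset R, f r
      = ∑ x ∈ R 0, ∑ r ∈ Fintype.piFinset (Fin.tail R), f (Fin.cons x r) := by
  have h : Fintype.piFinset R
      = (R 0 ×ˢ Fintype.piFinset (Fin.tail R)).map (Fin.consEquiv fun _ => γ).toEmbedding := by
    simpa using filter_piFinset_eq_map_consEquiv R fun _ => True
  rw [h, sum_map, sum_product]
  rfl

/-- The real weights `y j ≤ |Y j|` let the induction shrink the column budget by the exact factor
`ρ 0 j - ε`, although the surviving column sets are only known to be at least that large. -/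
theorem le_sum_prod_card_matchingCols {ε : ℝ} (hε : 0 ≤ ε) (A : Fin M → Fin N → T) {s : ℕ}
    (S : Fin s → Finset (Fin N)) (hsε : s * ε ≤ 1) {t : ℕ} (R : Fin t → Finset (Fin M))
    (C : Fin t → Fin s → T) (ρ : Fin t → Fin s → ℝ) (Y : Fin s → Finset (Fin N)) (y : Fin s → ℝ)
    (hreg : ∀ i j, IsRegularBlock2 ε A (R i) (S j))
    (hρ : ∀ i j, ρ i j ≤ blockDensity2 A (R i) (S j) (C i j))
    (hερ : ∀ i j, ε ≤ ρ i j) (hρ1 : ∀ i j, ρ i j ≤ 1) (hY : ∀ j, Y j ⊆ S j)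
    (hy0 : ∀ j, 0 ≤ y j) (hyY : ∀ j, y j ≤ (Y j).card)
    (hSy : ∀ j, ε * (S j).card ≤ (∏ i, (ρ i j - ε)) * y j) :
    (1 - s * ε) ^ t * (∏ i, ((R i).card : ℝ)) * ∏ j, ((∏ i, (ρ i j - ε)) * y j)
      ≤ ∑ r ∈ Fintype.piFinset R, ∏ j, ((matchingCols A (Y j) r fun i => C i j).card : ℝ) := by
  induction t generalizing Y y with
  | zero => simpa [matchingCols] using prod_le_prod (fun j _ => hy0 j) fun j _ => hyY j
  | succ t ih =>
    have hρε : ∀ i j, 0 ≤ ρ i j - ε := fun i j => sub_nonneg.mpr (hερ i j)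
    have hSY : ∀ j, ε * (S j).card ≤ (Y j).card := fun j =>
      (hSy j).trans <| (mul_le_of_le_one_left (hy0 j) <|
        prod_le_one (fun i _ => hρε i j) fun i _ => by linarith [hρ1 i j]).trans (hyY j)
    set Dense := (R 0).filter fun x => ∀ j,
      (ρ 0 j - ε) * (Y j).card ≤ ((Y j).filter fun y => A x y = C 0 j).card
    -- the bound for the remaining row classes, with weights shrunk by the factor of class 0
    set K := (1 - s * ε) ^ t * (∏ i : Fin t, ((R i.succ).card : ℝ)) *
      ∏ j, ((∏ i : Fin t, (ρ i.succ j - ε)) * ((ρ 0 j - ε) * y j))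
    have hK : 0 ≤ K := mul_nonneg (mul_nonneg (pow_nonneg (sub_nonneg.mpr hsε) t)
      (prod_nonneg fun _ _ => Nat.cast_nonneg _)) <| prod_nonneg fun j _ =>
        mul_nonneg (prod_nonneg fun i _ => hρε i.succ j) (mul_nonneg (hρε 0 j) (hy0 j))
    have hDense : ∀ x ∈ Dense, K ≤ ∑ r ∈ Fintype.piFinset (Fin.tail R),
        ∏ j, ((matchingCols A (Y j) (Fin.cons x r) fun i => C i j).card : ℝ) := by
      intro x hx
      simp_rw [matchingCols_cons]
      refine ih (Fin.tail R) (Fin.tail C) (fun i j => ρ i.succ j) _ _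
        (fun i j => hreg i.succ j) (fun i j => hρ i.succ j) (fun i j => hερ i.succ j)
        (fun i j => hρ1 i.succ j) (fun j => (filter_subset _ _).trans (hY j))
        (fun j => mul_nonneg (hρε 0 j) (hy0 j))
        (fun j => (mul_le_mul_of_nonneg_left (hyY j) (hρε 0 j)).trans ((mem_filter.mp hx).2 j))
        fun j => (hSy j).trans_eq ?_
      rw [Fin.prod_univ_succ]
      ring
    calc (1 - s * ε) ^ (t + 1) * (∏ i, ((R i).card : ℝ)) * ∏ j, ((∏ i, (ρ i j - ε)) * y j)
        = (1 - s * ε) * (R 0).card * K := by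
          have hcol : ∀ j, (∏ i, (ρ i j - ε)) * y j
              = (∏ i : Fin t, (ρ i.succ j - ε)) * ((ρ 0 j - ε) * y j) := fun j => by
            rw [Fin.prod_univ_succ]; ring
          simp only [K, hcol, Fin.prod_univ_succ fun i => ((R i).card : ℝ), pow_succ]
          ring
      _ ≤ Dense.card * K :=
          mul_le_mul_of_nonneg_right (card_denseRows_ge hε (hreg 0) (hρ 0) hY hSY) hK
      _ ≤ ∑ x ∈ Dense, ∑ r ∈ Fintype.piFinset (Fin.tail R),
            ∏ j, ((matchingCols A (Y j) (Fin.cons x r) fun i => C i j).card : ℝ) := by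
          rw [← nsmul_eq_mul]
          exact card_nsmul_le_sum Dense _ K hDense
      _ ≤ ∑ x ∈ R 0, ∑ r ∈ Fintype.piFinset (Fin.tail R),
            ∏ j, ((matchingCols A (Y j) (Fin.cons x r) fun i => C i j).card : ℝ) :=
          sum_le_sum_of_subset_of_nonneg (filter_subset _ _) fun _ _ _ =>
            sum_nonneg fun _ _ => prod_nonneg fun _ _ => Nat.cast_nonneg _
      _ = _ := (sum_piFinset_cons R fun r =>
          ∏ j, ((matchingCols A (Y j) r fun i => C i j).card : ℝ)).symm

lemma card_appearances_eq_sum (A : Fin M → Fin N → T) {t s : ℕ} (R : Fin t → Finset (Fin M))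
    (S : Fin s → Finset (Fin N)) (C : Fin t → Fin s → T) :
    (univ.filter fun rs : (Fin t → Fin M) × (Fin s → Fin N) =>
        (∀ i, rs.1 i ∈ R i) ∧ (∀ j, rs.2 j ∈ S j) ∧ ∀ i j, A (rs.1 i) (rs.2 j) = C i j).card
      = ∑ r ∈ Fintype.piFinset R, ∏ j, (matchingCols A (S j) r fun i => C i j).card := by
  have hP : ∀ (r : Fin t → Fin M) (s' : Fin s → Fin N),
      ((∀ i, r i ∈ R i) ∧ (∀ j, s' j ∈ S j) ∧ ∀ i j, A (r i) (s' j) = C i j) ↔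
        r ∈ Fintype.piFinset R ∧
          s' ∈ Fintype.piFinset fun j => matchingCols A (S j) r fun i => C i j := by
    intro r s'
    simp only [Fintype.mem_piFinset, matchingCols, mem_filter]
    grind
  calc _ = ∑ r : Fin t → Fin M, (univ.filter fun s' : Fin s → Fin N =>
          r ∈ Fintype.piFinset R ∧
            s' ∈ Fintype.piFinset fun j => matchingCols A (S j) r fun i => C i j).card := by
        simp only [hP, card_filter, Fintype.sum_prod_type]
    _ = ∑ r, if r ∈ Fintype.piFinset R then
          ∏ j, (matchingCols A (S j) r fun i => C i j).card else 0 := by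
        refine sum_congr rfl fun r _ => ?_
        split_ifs with hr
        · rw [← Fintype.card_piFinset]
          congr 1
          ext s'
          simp [hr]
        · simp [hr]
    _ = _ := by rw [sum_ite_mem, univ_inter]

end Counting

lemma eventually_counting_conditions {t s : ℕ} {δ : ℝ} (hδ : 0 < δ) {ρ : Fin t → Fin s → ℝ}
    (hρ : ∀ i j, 0 < ρ i j) :
    ∀ᶠ ε in 𝓝 (0 : ℝ),
      (1 - δ) * ∏ j, ∏ i, ρ i j ≤ (1 - s * ε) ^ t * ∏ j, ∏ i, (ρ i j - ε) ∧ s * ε ≤ 1 ∧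
        (∀ i j, ε ≤ ρ i j) ∧ ∀ j, ε ≤ ∏ i, (ρ i j - ε) := by
  have hP : 0 < ∏ j, ∏ i, ρ i j := prod_pos fun j _ => prod_pos fun i _ => hρ i j
  have hmain : Tendsto (fun ε : ℝ => (1 - s * ε) ^ t * ∏ j, ∏ i, (ρ i j - ε)) (𝓝 0)
      (𝓝 (∏ j, ∏ i, ρ i j)) := by
    simpa using ((by fun_prop : Continuous fun ε : ℝ =>
      (1 - s * ε) ^ t * ∏ j, ∏ i, (ρ i j - ε)).tendsto 0)
  have hsmall : Tendsto (fun ε : ℝ => s * ε) (𝓝 0) (𝓝 0) := by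
    simpa using ((by fun_prop : Continuous fun ε : ℝ => (s : ℝ) * ε).tendsto 0)
  have hcol : ∀ j, Tendsto (fun ε : ℝ => (∏ i, (ρ i j - ε)) - ε) (𝓝 0) (𝓝 (∏ i, ρ i j)) := by
    intro j
    simpa using ((by fun_prop : Continuous fun ε : ℝ => (∏ i, (ρ i j - ε)) - ε).tendsto 0)
  refine ((hmain.eventually_const_lt (by nlinarith)).mono fun _ h => h.le).and <|
    (hsmall.eventually_lt_const one_pos).mono (fun _ h => h.le) |>.and <|
    (eventually_all.2 fun i => eventually_all.2 fun j =>
      (tendsto_id.eventually_lt_const (hρ i j)).mono fun _ h => h.le).and <|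
    eventually_all.2 fun j => ((hcol j).eventually_const_lt
      (prod_pos fun i _ => hρ i j)).mono fun _ h => by linarith

theorem counting_lemma_two_dims_general (δ : ℝ) (hδ : 0 < δ) (t s : ℕ)
    (T : Type) [DecidableEq T]
    (C : Fin t → Fin s → T) (ρ : Fin t → Fin s → ℝ)
    (hρ0 : ∀ i j, 0 < ρ i j) (hρ1 : ∀ i j, ρ i j ≤ 1) :
    ∃ ε : ℝ, 0 < ε ∧
      ∀ (M N : ℕ) (A : Fin M → Fin N → T)
        (R : Fin t → Finset (Fin M)) (S : Fin s → Finset (Fin N))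
        (m : Fin t → ℕ) (n' : Fin s → ℕ),
        (∀ i, (R i).card = m i) → (∀ j, (S j).card = n' j) →
        (∀ i i', i ≠ i' → Disjoint (R i) (R i')) → (∀ x : Fin M, ∃ i, x ∈ R i) →
        (∀ j j', j ≠ j' → Disjoint (S j) (S j')) → (∀ y : Fin N, ∃ j, y ∈ S j) →
        (∀ i j, IsRegularBlock2 ε A (R i) (S j) ∧ blockDensity2 A (R i) (S j) (C i j) = ρ i j) →
        (1 - δ) * (∏ i, (m i : ℝ)) * (∏ j, (n' j : ℝ)) * (∏ i, ∏ j, ρ i j) ≤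
          ((Finset.univ.filter fun rs : (Fin t → Fin M) × (Fin s → Fin N) =>
              (∀ i, rs.1 i ∈ R i) ∧ (∀ j, rs.2 j ∈ S j) ∧
              ∀ i j, A (rs.1 i) (rs.2 j) = C i j).card : ℝ) := by
  obtain ⟨ε, ⟨hbound, hsε, hερ, hεcol⟩, hε⟩ :=
    ((eventually_counting_conditions hδ hρ0).filter_mono nhdsWithin_le_nhds).and
      (self_mem_nhdsWithin : ∀ᶠ ε in 𝓝[>] (0 : ℝ), 0 < ε) |>.exists
  refine ⟨ε, hε, fun M N A R S m n' hm hn _ _ _ _ hblock => ?_⟩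
  have hcount := le_sum_prod_card_matchingCols hε.le A S hsε R C ρ S (fun j => (S j).card)
    (fun i j => (hblock i j).1) (fun i j => (hblock i j).2.ge) hερ hρ1 (fun _ => subset_rfl)
    (fun _ => Nat.cast_nonneg _) (fun _ => le_rfl)
    (fun j => mul_le_mul_of_nonneg_right (hεcol j) (Nat.cast_nonneg _))
  rw [card_appearances_eq_sum]
  push_cast
  calc (1 - δ) * (∏ i, (m i : ℝ)) * (∏ j, (n' j : ℝ)) * (∏ i, ∏ j, ρ i j)
      = (∏ i, (m i : ℝ)) * (∏ j, (n' j : ℝ)) * ((1 - δ) * ∏ j, ∏ i, ρ i j) := by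
        rw [Finset.prod_comm]; ring
    _ ≤ (∏ i, (m i : ℝ)) * (∏ j, (n' j : ℝ)) * ((1 - s * ε) ^ t * ∏ j, ∏ i, (ρ i j - ε)) := by
        gcongr
    _ = (1 - s * ε) ^ t * (∏ i, ((R i).card : ℝ)) *
          ∏ j, ((∏ i, (ρ i j - ε)) * (S j).card) := by
        simp only [← hm, ← hn, prod_mul_distrib]; ring
    _ ≤ _ := hcount

/-- **Counting lemma for 2-dimensional matrices.**  For any `δ > 0`, integers
`t, s ≥ 1`, finite alphabet, `t × s` matrix `C` and reals `ρ i j ∈ (0,1]`, there is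
`ε > 0` such that the following holds.  Let `A` be a 2-dimensional matrix whose rows are
partitioned into sets `R 1, …, R t` with `|R i| = m i` and whose columns are partitioned
into sets `S 1, …, S s` with `|S j| = n' j`, such that every block `R i × S j` is
`ε`-regular with density of the symbol `C i j` equal to `ρ i j`.  Then the number of
tuples `(r, s')` with `r i ∈ R i`, `s' j ∈ S j` and `A (r i) (s' j) = C i j` for all
`i, j` is at least `(1 − δ)·∏ᵢ m i·∏ⱼ n' j·∏ᵢ∏ⱼ ρ i j`. -/
theorem counting_lemma_two_dims (δ : ℝ) (hδ : 0 < δ) (t s : ℕ) (ht : 1 ≤ t) (hs : 1 ≤ s)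
    (T : Type) [Fintype T] [DecidableEq T]
    (C : Fin t → Fin s → T) (ρ : Fin t → Fin s → ℝ)
    (hρ0 : ∀ i j, 0 < ρ i j) (hρ1 : ∀ i j, ρ i j ≤ 1) :
    ∃ ε : ℝ, 0 < ε ∧
      ∀ (M N : ℕ) (A : Fin M → Fin N → T)
        (R : Fin t → Finset (Fin M)) (S : Fin s → Finset (Fin N))
        (m : Fin t → ℕ) (n' : Fin s → ℕ),
        (∀ i, (R i).card = m i) → (∀ j, (S j).card = n' j) →
        (∀ i i', i ≠ i' → Disjoint (R i) (R i')) → (∀ x : Fin M, ∃ i, x ∈ R i) →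
        (∀ j j', j ≠ j' → Disjoint (S j) (S j')) → (∀ y : Fin N, ∃ j, y ∈ S j) →
        (∀ i j, IsRegularBlock2 ε A (R i) (S j) ∧ blockDensity2 A (R i) (S j) (C i j) = ρ i j) →
        (1 - δ) * (∏ i, (m i : ℝ)) * (∏ j, (n' j : ℝ)) * (∏ i, ∏ j, ρ i j) ≤
          ((Finset.univ.filter fun rs : (Fin t → Fin M) × (Fin s → Fin N) =>
              (∀ i, rs.1 i ∈ R i) ∧ (∀ j, rs.2 j ∈ S j) ∧
              ∀ i j, A (rs.1 i) (rs.2 j) = C i j).card : ℝ) :=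
  counting_lemma_two_dims_general δ hδ t s T C ρ hρ0 hρ1
end
end

section
/- Explicit counting bound for 2-dimensional matrices: Let ε > 0, let t, s ≥ 1 be integers with t·ε < 1, let Σ be a finite alphabet, let C = (c_{i,j}) be a t × s matrix over Σ, and let ρ_{i,j} ∈ (0,1] satisfy ∏_{j=1}^{k}(ρ_{i,j} − ε) ≥ ε for every i ∈ {1,…,t} and every k ∈ {1,…,s}. Let A be a 2-dimensional matrix over Σ whose rows are partitioned into sets R_1,…,R_t with |R_i| = m_i and whose columns are partitioned into sets S_1,…,S_s with |S_j| = n_j, and suppose every block B_{i,j} = R_i × S_j of A is ε-regular with density of the symbol c_{i,j} equal to ρ_{i,j}. Then the number of tuples (r_1,…,r_t, s_1,…,s_s) with r_i ∈ R_i, s_j ∈ S_j, and a_{r_i,s_j} = c_{i,j} for all i, j is at least (1 − tε)^s · ∏_{i=1}^t m_i · ∏_{j=1}^s n_j · ∏_{i=1}^t ∏_{j=1}^s (ρ_{i,j} − ε). -/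
/-
STATEMENT 7: Explicit counting bound for 2-dimensional matrices: let ε > 0, t, s ≥ 1
with t·ε < 1, C a t × s matrix over a finite alphabet, and ρ_{i,j} ∈ (0,1] with
∏_{j=1}^{k}(ρ_{i,j} − ε) ≥ ε for all i and k.  If the rows of A are partitioned into
R_1,…,R_t and the columns into S_1,…,S_s, and every block R_i × S_j is ε-regular with
density of c_{i,j} equal to ρ_{i,j}, then the number of aligned appearances of C in A
is at least (1 − tε)^s·∏ m_i·∏ n_j·∏∏(ρ_{i,j} − ε).
-/

open Finset

noncomputable section

private lemma blockWeight2_sum {m n : ℕ} {T : Type*} [DecidableEq T] (A : Fin m → Fin n → T)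
    (S1 : Finset (Fin m)) (S2 : Finset (Fin n)) (σ : T) :
    blockWeight2 A S1 S2 σ = ∑ c ∈ S2, (S1.filter fun r => A r c = σ).card := by
  unfold blockWeight2
  rw [Finset.card_filter, Finset.sum_product, Finset.sum_comm]
  exact Finset.sum_congr rfl fun c _ => (Finset.card_filter _ _).symm

/-- **Explicit counting bound for 2-dimensional matrices.**  Let `ε > 0`, let
`t, s ≥ 1` with `t·ε < 1`, let `C` be a `t × s` matrix over a finite alphabet, and let
`ρ i j ∈ (0,1]` satisfy `∏_{j ≤ k} (ρ i j − ε) ≥ ε` for every row index `i` and every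
`k`.  Let `A` be a 2-dimensional matrix whose rows are partitioned into sets
`R 1, …, R t` with `|R i| = m i` and whose columns are partitioned into sets
`S 1, …, S s` with `|S j| = n' j`, every block `R i × S j` being `ε`-regular with
density of the symbol `C i j` equal to `ρ i j`.  Then the number of tuples `(r, s')`
with `r i ∈ R i`, `s' j ∈ S j` and `A (r i) (s' j) = C i j` for all `i, j` is at least
`(1 − t·ε)^s·∏ᵢ m i·∏ⱼ n' j·∏ᵢ∏ⱼ (ρ i j − ε)`. -/
theorem counting_bound_two_dims (ε : ℝ) (hε : 0 < ε) (t s : ℕ) (ht : 1 ≤ t) (hs : 1 ≤ s)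
    (htε : (t : ℝ) * ε < 1)
    (T : Type) [Fintype T] [DecidableEq T]
    (C : Fin t → Fin s → T) (ρ : Fin t → Fin s → ℝ)
    (hρ0 : ∀ i j, 0 < ρ i j) (hρ1 : ∀ i j, ρ i j ≤ 1)
    (hprod : ∀ (i : Fin t) (k : Fin s), ε ≤ ∏ j ∈ Finset.Iic k, (ρ i j - ε))
    (M N : ℕ) (A : Fin M → Fin N → T)
    (R : Fin t → Finset (Fin M)) (S : Fin s → Finset (Fin N))
    (m : Fin t → ℕ) (n' : Fin s → ℕ)
    (hm : ∀ i, (R i).card = m i) (hn : ∀ j, (S j).card = n' j)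
    (hRdisj : ∀ i i', i ≠ i' → Disjoint (R i) (R i')) (hRcov : ∀ x : Fin M, ∃ i, x ∈ R i)
    (hSdisj : ∀ j j', j ≠ j' → Disjoint (S j) (S j')) (hScov : ∀ y : Fin N, ∃ j, y ∈ S j)
    (hblocks : ∀ i j, IsRegularBlock2 ε A (R i) (S j) ∧
      blockDensity2 A (R i) (S j) (C i j) = ρ i j) :
    (1 - (t : ℝ) * ε) ^ s * (∏ i, (m i : ℝ)) * (∏ j, (n' j : ℝ)) *
        (∏ i, ∏ j, (ρ i j - ε)) ≤
      ((Finset.univ.filter fun rs : (Fin t → Fin M) × (Fin s → Fin N) =>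
          (∀ i, rs.1 i ∈ R i) ∧ (∀ j, rs.2 j ∈ S j) ∧
          ∀ i j, A (rs.1 i) (rs.2 j) = C i j).card : ℝ) := by
  classical
  -- every factor `ρ i j - ε` is at least `ε`
  have hfac : ∀ i (j : Fin s), ε ≤ ρ i j - ε := by
    intro i j
    have key : ∀ nn : ℕ, ∀ j : Fin s, (j : ℕ) = nn → ε ≤ ρ i j - ε := by
      intro nn
      induction nn using Nat.strong_induction_on with
      | _ nn IH =>
        intro j hj
        have hpos : ∀ j' ∈ Finset.Iio j, 0 < ρ i j' - ε := by
          intro j' hj'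
          have hlt : (j' : ℕ) < nn := by
            rw [Finset.mem_Iio, Fin.lt_def] at hj'; omega
          exact lt_of_lt_of_le hε (IH _ hlt j' rfl)
        have hle1 : ∀ j' ∈ Finset.Iio j, ρ i j' - ε ≤ 1 := by
          intro j' _; have := hρ1 i j'; linarith
        have hIio1 : ∏ j' ∈ Finset.Iio j, (ρ i j' - ε) ≤ 1 :=
          Finset.prod_le_one (fun j' hj' => (hpos j' hj').le) hle1
        have hIio0 : 0 < ∏ j' ∈ Finset.Iio j, (ρ i j' - ε) := Finset.prod_pos hpos
        have hins : ε ≤ (ρ i j - ε) * ∏ j' ∈ Finset.Iio j, (ρ i j' - ε) := by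
          have h := hprod i j
          rwa [← Finset.Iio_insert, Finset.prod_insert (by simp)] at h
        nlinarith
    exact key _ j rfl
  have hε1 : ε ≤ 1 := by
    have h1 := hfac ⟨0, ht⟩ ⟨0, hs⟩
    have h2 := hρ1 ⟨0, ht⟩ ⟨0, hs⟩
    linarith
  have ht0 : (0:ℝ) ≤ 1 - (t:ℝ) * ε := by linarith
  -- degenerate cases
  rcases em (∀ i, 0 < m i) with hm1 | hm1
  swap
  · push_neg at hm1
    obtain ⟨i, hi⟩ := hm1
    have hz : (∏ i, (m i : ℝ)) = 0 :=
      Finset.prod_eq_zero (Finset.mem_univ i) (by simp [Nat.le_zero.mp hi])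
    have : (1 - (t : ℝ) * ε) ^ s * (∏ i, (m i : ℝ)) * (∏ j, (n' j : ℝ)) *
        (∏ i, ∏ j, (ρ i j - ε)) = 0 := by rw [hz]; ring
    rw [this]; exact Nat.cast_nonneg _
  rcases em (∀ j, 0 < n' j) with hn1 | hn1
  swap
  · push_neg at hn1
    obtain ⟨j, hj⟩ := hn1
    have hz : (∏ j, (n' j : ℝ)) = 0 :=
      Finset.prod_eq_zero (Finset.mem_univ j) (by simp [Nat.le_zero.mp hj])
    have : (1 - (t : ℝ) * ε) ^ s * (∏ i, (m i : ℝ)) * (∏ j, (n' j : ℝ)) *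
        (∏ i, ∏ j, (ρ i j - ε)) = 0 := by rw [hz]; ring
    rw [this]; exact Nat.cast_nonneg _
  obtain ⟨y0, hy0⟩ : (S ⟨0, hs⟩).Nonempty :=
    Finset.card_pos.mp (by rw [hn ⟨0, hs⟩]; exact hn1 ⟨0, hs⟩)
  set Sk : ℕ → Fin s → Finset (Fin N) := fun k j => if k ≤ (j : ℕ) then S j else {y0} with hSk
  -- the main downward induction
  have main : ∀ d k, k + d = s → ∀ X : Fin t → Finset (Fin M),
      (∀ i, X i ⊆ R i) →
      (∀ i, (∏ j ∈ Finset.univ.filter fun j : Fin s => (j : ℕ) < k, (ρ i j - ε)) * (m i : ℝ)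
        ≤ ((X i).card : ℝ)) →
      (1 - (t : ℝ) * ε) ^ d *
          (∏ j ∈ Finset.univ.filter fun j : Fin s => k ≤ (j : ℕ), (n' j : ℝ)) *
          (∏ i, ((X i).card : ℝ)) *
          (∏ i, ∏ j ∈ Finset.univ.filter fun j : Fin s => k ≤ (j : ℕ), (ρ i j - ε))
        ≤ ((∑ y ∈ Fintype.piFinset (Sk k), ∏ i, ((X i).filter fun r =>
            ∀ j : Fin s, k ≤ (j : ℕ) → A r (y j) = C i j).card : ℕ) : ℝ) := by
    intro d
    induction d with
    | zero =>
      intro k hk X hXsub hXlow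
      have hks : k = s := by omega
      have hfil : (Finset.univ.filter fun j : Fin s => k ≤ (j : ℕ)) = (∅ : Finset (Fin s)) :=
        Finset.filter_false_of_mem (fun j _ => by have := j.isLt; omega)
      have hcond : ∀ (y : Fin s → Fin N) i, ((X i).filter fun r =>
          ∀ j : Fin s, k ≤ (j : ℕ) → A r (y j) = C i j) = X i := by
        intro y i
        apply Finset.filter_true_of_mem
        intro r _ j hj
        exact absurd hj (by have := j.isLt; omega)
      have hcard1 : (Fintype.piFinset (Sk k)).card = 1 := by
        rw [Fintype.card_piFinset]
        apply Finset.prod_eq_one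
        intro j _
        have hj : ¬ k ≤ (j : ℕ) := by have := j.isLt; omega
        simp [hSk, hj]
      simp only [hcond, Finset.sum_const, hcard1, one_smul, hfil, Finset.prod_empty,
        pow_zero, one_mul, mul_one, Finset.prod_const_one]
      rw [Nat.cast_prod]
    | succ d IH =>
      intro k hk X hXsub hXlow
      have hks : k < s := by omega
      set jk : Fin s := ⟨k, hks⟩ with hjk
      have hjkv : (jk : ℕ) = k := rfl
      have hjk1 : ¬ (k + 1 ≤ (jk : ℕ)) := by simp only [hjkv]; omega
      have hjk2 : k ≤ (jk : ℕ) := by simp only [hjkv]; omega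
      -- nonnegativity facts
      have hρε : ∀ i (j : Fin s), (0:ℝ) < ρ i j - ε := fun i j => lt_of_lt_of_le hε (hfac i j)
      have hpre : ∀ i, ε ≤ ∏ j ∈ Finset.univ.filter fun j : Fin s => (j : ℕ) < k, (ρ i j - ε) := by
        intro i
        rcases Nat.eq_zero_or_pos k with h0 | h1
        · subst h0
          rw [Finset.filter_false_of_mem (fun j _ => by omega)]
          simpa using hε1
        · have heq : (Finset.univ.filter fun j : Fin s => (j : ℕ) < k)
              = Finset.Iic (⟨k - 1, by omega⟩ : Fin s) := by
            ext j
            simp only [Finset.mem_filter, Finset.mem_univ, true_and, Finset.mem_Iic, Fin.le_def]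
            omega
          rw [heq]; exact hprod i _
      have hεX : ∀ i, ε * (m i : ℝ) ≤ ((X i).card : ℝ) := fun i =>
        le_trans (mul_le_mul_of_nonneg_right (hpre i) (Nat.cast_nonneg _)) (hXlow i)
      have hXpos : ∀ i, (0:ℝ) < ((X i).card : ℝ) := by
        intro i
        refine lt_of_lt_of_le ?_ (hεX i)
        have hmi : (0:ℝ) < (m i : ℝ) := by exact_mod_cast hm1 i
        positivity
      set Xc : Fin N → Fin t → Finset (Fin M) :=
        fun c i => (X i).filter fun r => A r c = C i jk with hXc
      -- bad sets are small
      have hbad : ∀ i, ((((S jk).filter fun c =>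
          (((Xc c i).card : ℝ) < (ρ i jk - ε) * ((X i).card : ℝ))).card : ℝ)
            ≤ ε * (n' jk : ℝ)) := by
        intro i
        by_contra hcon
        push_neg at hcon
        set B := (S jk).filter fun c =>
          (((Xc c i).card : ℝ) < (ρ i jk - ε) * ((X i).card : ℝ)) with hB
        have hBsub : B ⊆ S jk := Finset.filter_subset _ _
        have hBcard : ε * ((S jk).card : ℝ) ≤ (B.card : ℝ) := by rw [hn]; exact hcon.le
        have hreg := (hblocks i jk).1 (C i jk) (X i) B (hXsub i) hBsub
          (by rw [hm]; exact hεX i) hBcard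
        rw [(hblocks i jk).2] at hreg
        have hnk : (0:ℝ) < (n' jk : ℝ) := by exact_mod_cast hn1 jk
        have hBpos : (0:ℝ) < (B.card : ℝ) := lt_of_lt_of_le (by positivity) hcon.le
        have hBne : B.Nonempty := Finset.card_pos.mp (by exact_mod_cast hBpos)
        have hW : ((blockWeight2 A (X i) B (C i jk) : ℕ) : ℝ)
            < (ρ i jk - ε) * (((X i).card : ℝ) * (B.card : ℝ)) := by
          rw [blockWeight2_sum]
          push_cast
          calc ∑ c ∈ B, (((X i).filter fun r => A r c = C i jk).card : ℝ)
              < ∑ c ∈ B, (ρ i jk - ε) * ((X i).card : ℝ) :=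
                Finset.sum_lt_sum_of_nonempty hBne (fun c hc => (Finset.mem_filter.mp hc).2)
            _ = (ρ i jk - ε) * (((X i).card : ℝ) * (B.card : ℝ)) := by
                rw [Finset.sum_const]; push_cast; ring
        have hdens : blockDensity2 A (X i) B (C i jk) < ρ i jk - ε := by
          unfold blockDensity2
          rw [div_lt_iff₀ (mul_pos (hXpos i) hBpos)]
          exact hW
        have habs := (abs_le.mp hreg).1
        linarith
      -- good columns
      set G := (S jk).filter (fun c => ∀ i,
        (ρ i jk - ε) * ((X i).card : ℝ) ≤ ((Xc c i).card : ℝ)) with hG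
      have hGsub : G ⊆ S jk := Finset.filter_subset _ _
      have hGcard : (1 - (t:ℝ)*ε) * (n' jk : ℝ) ≤ (G.card : ℝ) := by
        have hsd : (S jk) \ G ⊆ Finset.univ.biUnion (fun i => (S jk).filter fun c =>
            (((Xc c i).card : ℝ) < (ρ i jk - ε) * ((X i).card : ℝ))) := by
          intro c hc
          rw [Finset.mem_sdiff] at hc
          obtain ⟨hc1, hc2⟩ := hc
          have : ∃ i, ((Xc c i).card : ℝ) < (ρ i jk - ε) * ((X i).card : ℝ) := by
            by_contra hno
            push_neg at hno
            exact hc2 (Finset.mem_filter.mpr ⟨hc1, fun i => hno i⟩)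
          obtain ⟨i, hi⟩ := this
          exact Finset.mem_biUnion.mpr ⟨i, Finset.mem_univ i, Finset.mem_filter.mpr ⟨hc1, hi⟩⟩
        have h1 : (((S jk) \ G).card : ℝ) ≤ (t : ℝ) * (ε * (n' jk : ℝ)) := by
          calc (((S jk) \ G).card : ℝ)
              ≤ ((Finset.univ.biUnion (fun i => (S jk).filter fun c =>
                  (((Xc c i).card : ℝ) < (ρ i jk - ε) * ((X i).card : ℝ)))).card : ℝ) := by
                exact_mod_cast Finset.card_le_card hsd
            _ ≤ ∑ i : Fin t, (((S jk).filter fun c =>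
                  (((Xc c i).card : ℝ) < (ρ i jk - ε) * ((X i).card : ℝ))).card : ℝ) := by
                exact_mod_cast Finset.card_biUnion_le
            _ ≤ ∑ _i : Fin t, ε * (n' jk : ℝ) := Finset.sum_le_sum (fun i _ => hbad i)
            _ = (t : ℝ) * (ε * (n' jk : ℝ)) := by
                rw [Finset.sum_const]; simp [nsmul_eq_mul]
        have h2 := Finset.card_sdiff_add_card_eq_card hGsub
        have h2' : (((S jk) \ G).card : ℝ) + (G.card : ℝ) = (n' jk : ℝ) := by
          rw [← hn jk]; exact_mod_cast h2
        linarith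
      -- filter set identities
      have hF0 : (Finset.univ.filter fun j : Fin s => k ≤ (j : ℕ))
          = insert jk (Finset.univ.filter fun j : Fin s => k + 1 ≤ (j : ℕ)) := by
        ext j
        simp only [Finset.mem_filter, Finset.mem_univ, true_and, Finset.mem_insert]
        constructor
        · intro h
          by_cases hj : j = jk
          · exact Or.inl hj
          · exact Or.inr (by have : (j : ℕ) ≠ k := fun hh => hj (Fin.ext hh); omega)
        · rintro (h | h)
          · subst h; exact le_refl k
          · omega
      have hnmem : jk ∉ (Finset.univ.filter fun j : Fin s => k + 1 ≤ (j : ℕ)) := by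
        simp only [Finset.mem_filter, Finset.mem_univ, true_and]
        exact hjk1
      -- the common lower bound
      set B0 : ℝ := (1 - (t:ℝ)*ε) ^ d *
          (∏ j ∈ Finset.univ.filter fun j : Fin s => k + 1 ≤ (j : ℕ), (n' j : ℝ)) *
          (∏ i, ((ρ i jk - ε) * ((X i).card : ℝ))) *
          (∏ i, ∏ j ∈ Finset.univ.filter fun j : Fin s => k + 1 ≤ (j : ℕ), (ρ i j - ε)) with hB0
      have hn'nonneg : (0:ℝ) ≤ ∏ j ∈ Finset.univ.filter fun j : Fin s => k + 1 ≤ (j : ℕ),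
          (n' j : ℝ) := Finset.prod_nonneg (fun j _ => Nat.cast_nonneg _)
      have hρρnonneg : (0:ℝ) ≤ ∏ i, ∏ j ∈ Finset.univ.filter fun j : Fin s => k + 1 ≤ (j : ℕ),
          (ρ i j - ε) := Finset.prod_nonneg (fun i _ =>
            Finset.prod_nonneg (fun j _ => (hρε i j).le))
      have hB0nonneg : 0 ≤ B0 := by
        rw [hB0]
        apply mul_nonneg
        apply mul_nonneg
        apply mul_nonneg
        · exact pow_nonneg ht0 _
        · exact hn'nonneg
        · exact Finset.prod_nonneg (fun i _ => mul_nonneg (hρε i jk).le (Nat.cast_nonneg _))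
        · exact hρρnonneg
      -- for each good column, IH gives a bound
      have hgood : ∀ c ∈ G, B0 ≤ ((∑ y ∈ Fintype.piFinset (Sk (k+1)), ∏ i,
          ((Xc c i).filter fun r =>
            ∀ j : Fin s, k + 1 ≤ (j : ℕ) → A r (y j) = C i j).card : ℕ) : ℝ) := by
        intro c hc
        have hcG := (Finset.mem_filter.mp hc).2
        have hsub' : ∀ i, Xc c i ⊆ R i := fun i =>
          (Finset.filter_subset _ _).trans (hXsub i)
        have hlow' : ∀ i, (∏ j ∈ Finset.univ.filter fun j : Fin s => (j : ℕ) < k + 1,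
            (ρ i j - ε)) * (m i : ℝ) ≤ ((Xc c i).card : ℝ) := by
          intro i
          have hF0' : (Finset.univ.filter fun j : Fin s => (j : ℕ) < k + 1)
              = insert jk (Finset.univ.filter fun j : Fin s => (j : ℕ) < k) := by
            ext j
            simp only [Finset.mem_filter, Finset.mem_univ, true_and, Finset.mem_insert]
            constructor
            · intro h
              by_cases hj : j = jk
              · exact Or.inl hj
              · exact Or.inr (by have : (j : ℕ) ≠ k := fun hh => hj (Fin.ext hh); omega)
            · rintro (h | h)
              · subst h; omega
              · omega
          have hnmem' : jk ∉ (Finset.univ.filter fun j : Fin s => (j : ℕ) < k) := by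
            simp only [Finset.mem_filter, Finset.mem_univ, true_and]
            omega
          rw [hF0', Finset.prod_insert hnmem']
          calc (ρ i jk - ε) * (∏ j ∈ Finset.univ.filter fun j : Fin s => (j : ℕ) < k,
              (ρ i j - ε)) * (m i : ℝ)
              = (ρ i jk - ε) * ((∏ j ∈ Finset.univ.filter fun j : Fin s => (j : ℕ) < k,
                (ρ i j - ε)) * (m i : ℝ)) := by ring
            _ ≤ (ρ i jk - ε) * ((X i).card : ℝ) :=
                mul_le_mul_of_nonneg_left (hXlow i) (hρε i jk).le
            _ ≤ ((Xc c i).card : ℝ) := hcG i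
        have hIH := IH (k+1) (by omega) (Xc c) hsub' hlow'
        refine le_trans ?_ hIH
        rw [hB0]
        have h3 : ∏ i, ((ρ i jk - ε) * ((X i).card : ℝ)) ≤ ∏ i, (((Xc c i).card : ℝ)) :=
          Finset.prod_le_prod (fun i _ => mul_nonneg (hρε i jk).le (Nat.cast_nonneg _))
            (fun i _ => hcG i)
        calc (1 - (t:ℝ)*ε) ^ d *
            (∏ j ∈ Finset.univ.filter fun j : Fin s => k + 1 ≤ (j : ℕ), (n' j : ℝ)) *
            (∏ i, ((ρ i jk - ε) * ((X i).card : ℝ))) *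
            (∏ i, ∏ j ∈ Finset.univ.filter fun j : Fin s => k + 1 ≤ (j : ℕ), (ρ i j - ε))
            = ((1 - (t:ℝ)*ε) ^ d *
              (∏ j ∈ Finset.univ.filter fun j : Fin s => k + 1 ≤ (j : ℕ), (n' j : ℝ)) *
              (∏ i, ∏ j ∈ Finset.univ.filter fun j : Fin s => k + 1 ≤ (j : ℕ), (ρ i j - ε))) *
              (∏ i, ((ρ i jk - ε) * ((X i).card : ℝ))) := by ring
          _ ≤ ((1 - (t:ℝ)*ε) ^ d *
              (∏ j ∈ Finset.univ.filter fun j : Fin s => k + 1 ≤ (j : ℕ), (n' j : ℝ)) *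
              (∏ i, ∏ j ∈ Finset.univ.filter fun j : Fin s => k + 1 ≤ (j : ℕ), (ρ i j - ε))) *
              (∏ i, (((Xc c i).card : ℝ))) := by
                apply mul_le_mul_of_nonneg_left h3
                apply mul_nonneg (mul_nonneg (pow_nonneg ht0 _) hn'nonneg) hρρnonneg
          _ = (1 - (t:ℝ)*ε) ^ d *
              (∏ j ∈ Finset.univ.filter fun j : Fin s => k + 1 ≤ (j : ℕ), (n' j : ℝ)) *
              (∏ i, (((Xc c i).card : ℝ))) *
              (∏ i, ∏ j ∈ Finset.univ.filter fun j : Fin s => k + 1 ≤ (j : ℕ), (ρ i j - ε)) := by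
                ring
      -- assemble
      -- the splitting identity
      have hsplit : (∑ y ∈ Fintype.piFinset (Sk k), ∏ i, ((X i).filter fun r =>
            ∀ j : Fin s, k ≤ (j : ℕ) → A r (y j) = C i j).card)
          = ∑ c ∈ S jk, ∑ y ∈ Fintype.piFinset (Sk (k+1)), ∏ i, ((Xc c i).filter fun r =>
            ∀ j : Fin s, k + 1 ≤ (j : ℕ) → A r (y j) = C i j).card := by
        rw [← Finset.sum_product']
        have hSkk : ∀ j : Fin s, j ≠ jk → Sk k j = Sk (k+1) j := by
          intro j hj
          have hjv : (j : ℕ) ≠ k := fun h => hj (Fin.ext h)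
          simp only [hSk]
          by_cases h : k + 1 ≤ (j : ℕ)
          · rw [if_pos (show k ≤ (j : ℕ) by omega), if_pos h]
          · rw [if_neg (show ¬ k ≤ (j : ℕ) by omega), if_neg h]
        refine Finset.sum_bij' (i := fun y _ => (y jk, Function.update y jk y0))
          (j := fun p _ => Function.update p.2 jk p.1) ?_ ?_ ?_ ?_ ?_
        · intro y hy
          rw [Fintype.mem_piFinset] at hy
          rw [Finset.mem_product]
          constructor
          · have := hy jk
            simpa [hSk, hjk2] using this
          · rw [Fintype.mem_piFinset]
            intro j
            show Function.update y jk y0 j ∈ Sk (k + 1) j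
            by_cases hj : j = jk
            · subst hj
              simp [hSk, hjk1, Function.update_self]
            · rw [Function.update_of_ne hj, ← hSkk j hj]
              exact hy j
        · intro p hp
          rw [Finset.mem_product] at hp
          rw [Fintype.mem_piFinset]
          intro j
          by_cases hj : j = jk
          · subst hj
            simpa [hSk, hjk2, Function.update_self] using hp.1
          · rw [Function.update_of_ne hj, hSkk j hj]
            exact Fintype.mem_piFinset.mp hp.2 j
        · intro y hy
          show Function.update (Function.update y jk y0) jk (y jk) = y
          funext j
          by_cases hj : j = jk
          · subst hj; simp [Function.update_self]
          · simp [Function.update_of_ne hj]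
        · intro p hp
          rw [Finset.mem_product] at hp
          have hpj : p.2 jk = y0 := by
            have := Fintype.mem_piFinset.mp hp.2 jk
            simpa [hSk, hjk1] using this
          show ((Function.update p.2 jk p.1) jk, Function.update (Function.update p.2 jk p.1) jk y0) = p
          have h1 : Function.update p.2 jk p.1 jk = p.1 := Function.update_self _ _ _
          have h2 : Function.update (Function.update p.2 jk p.1) jk y0 = p.2 := by
            funext j
            by_cases hj : j = jk
            · subst hj; rw [Function.update_self, hpj]
            · rw [Function.update_of_ne hj, Function.update_of_ne hj]
          rw [h1, h2]
        · intro y hy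
          show (∏ i, ((X i).filter fun r =>
              ∀ j : Fin s, k ≤ (j : ℕ) → A r (y j) = C i j).card)
            = ∏ i, ((Xc (y jk) i).filter fun r =>
              ∀ j : Fin s, k + 1 ≤ (j : ℕ) → A r (Function.update y jk y0 j) = C i j).card
          apply Finset.prod_congr rfl
          intro i _
          congr 1
          ext r
          simp only [Finset.mem_filter, hXc]
          constructor
          · rintro ⟨hr, hall⟩
            refine ⟨⟨hr, hall jk hjk2⟩, ?_⟩
            intro j hj
            have hne : j ≠ jk := by
              intro h; subst h; omega
            rw [Function.update_of_ne hne]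
            exact hall j (by omega)
          · rintro ⟨⟨hr, hjk'⟩, hall⟩
            refine ⟨hr, ?_⟩
            intro j hj
            by_cases h : j = jk
            · subst h; exact hjk'
            · have hjv : k + 1 ≤ (j : ℕ) := by
                have : (j : ℕ) ≠ k := fun hh => h (Fin.ext hh)
                omega
              have := hall j hjv
              rwa [Function.update_of_ne h] at this
      rw [hsplit]
      push_cast
      have hchain : (1 - (t:ℝ)*ε) * (n' jk : ℝ) * B0
          ≤ ∑ c ∈ S jk, ((∑ y ∈ Fintype.piFinset (Sk (k+1)), ∏ i,
            ((Xc c i).filter fun r =>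
              ∀ j : Fin s, k + 1 ≤ (j : ℕ) → A r (y j) = C i j).card : ℕ) : ℝ) := by
        calc (1 - (t:ℝ)*ε) * (n' jk : ℝ) * B0
            ≤ (G.card : ℝ) * B0 := mul_le_mul_of_nonneg_right hGcard hB0nonneg
          _ = ∑ _c ∈ G, B0 := by rw [Finset.sum_const, nsmul_eq_mul]
          _ ≤ ∑ c ∈ G, ((∑ y ∈ Fintype.piFinset (Sk (k+1)), ∏ i,
              ((Xc c i).filter fun r =>
                ∀ j : Fin s, k + 1 ≤ (j : ℕ) → A r (y j) = C i j).card : ℕ) : ℝ) :=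
              Finset.sum_le_sum hgood
          _ ≤ ∑ c ∈ S jk, ((∑ y ∈ Fintype.piFinset (Sk (k+1)), ∏ i,
              ((Xc c i).filter fun r =>
                ∀ j : Fin s, k + 1 ≤ (j : ℕ) → A r (y j) = C i j).card : ℕ) : ℝ) :=
              Finset.sum_le_sum_of_subset_of_nonneg hGsub
                (fun c _ _ => Nat.cast_nonneg _)
      refine le_trans ?_ (by exact_mod_cast hchain)
      -- LHS equals (1 - tε) * n' jk * B0
      simp only [hB0, hF0, Finset.prod_insert hnmem]
      have hprodins : ∏ i, ((ρ i jk - ε) *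
          ∏ j ∈ Finset.univ.filter fun j : Fin s => k + 1 ≤ (j : ℕ), (ρ i j - ε))
          = (∏ i, (ρ i jk - ε)) *
            ∏ i, ∏ j ∈ Finset.univ.filter fun j : Fin s => k + 1 ≤ (j : ℕ), (ρ i j - ε) :=
        Finset.prod_mul_distrib
      have hXprod : ∏ i, ((ρ i jk - ε) * ((X i).card : ℝ))
          = (∏ i, (ρ i jk - ε)) * ∏ i, ((X i).card : ℝ) := Finset.prod_mul_distrib
      refine le_of_eq ?_
      rw [hprodins, hXprod, pow_succ]
      ring
  -- apply the induction with k = 0, X = R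
  have h0sub : ∀ i, R i ⊆ R i := fun i => le_refl _
  have h0low : ∀ i, (∏ j ∈ Finset.univ.filter fun j : Fin s => (j : ℕ) < 0, (ρ i j - ε)) *
      (m i : ℝ) ≤ ((R i).card : ℝ) := by
    intro i
    rw [Finset.filter_false_of_mem (fun j _ => by omega), Finset.prod_empty, one_mul, hm]
  have hmain := main s 0 (by omega) R h0sub h0low
  -- simplify the k = 0 statement
  have hfilall : (Finset.univ.filter fun j : Fin s => 0 ≤ (j : ℕ)) = Finset.univ :=
    Finset.filter_true_of_mem (fun j _ => Nat.zero_le _)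
  rw [hfilall] at hmain
  have hSk0 : Sk 0 = S := by
    funext j
    simp [hSk]
  rw [hSk0] at hmain
  -- identify the count with the sum
  have hcount : ((Finset.univ.filter fun rs : (Fin t → Fin M) × (Fin s → Fin N) =>
          (∀ i, rs.1 i ∈ R i) ∧ (∀ j, rs.2 j ∈ S j) ∧
          ∀ i j, A (rs.1 i) (rs.2 j) = C i j).card)
      = ∑ y ∈ Fintype.piFinset S, ∏ i, ((R i).filter fun r =>
          ∀ j : Fin s, 0 ≤ (j : ℕ) → A r (y j) = C i j).card := by
    rw [Finset.card_filter]
    rw [Fintype.sum_prod_type]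
    rw [Finset.sum_comm]
    have hinner : ∀ y : Fin s → Fin N,
        (∑ r : Fin t → Fin M, if (∀ i, r i ∈ R i) ∧ (∀ j, y j ∈ S j) ∧
          ∀ i j, A (r i) (y j) = C i j then 1 else 0)
        = if y ∈ Fintype.piFinset S then (∏ i, ((R i).filter fun r =>
            ∀ j : Fin s, 0 ≤ (j : ℕ) → A r (y j) = C i j).card) else 0 := by
      intro y
      by_cases hy : ∀ j, y j ∈ S j
      · rw [if_pos (Fintype.mem_piFinset.mpr hy)]
        have hset : (Finset.univ.filter fun r : Fin t → Fin M =>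
            (∀ i, r i ∈ R i) ∧ (∀ j, y j ∈ S j) ∧ ∀ i j, A (r i) (y j) = C i j)
            = Fintype.piFinset (fun i => (R i).filter fun r =>
              ∀ j : Fin s, 0 ≤ (j : ℕ) → A r (y j) = C i j) := by
          ext r
          simp only [Finset.mem_filter, Finset.mem_univ, true_and, Fintype.mem_piFinset]
          constructor
          · rintro ⟨h1, _, h3⟩
            exact fun i => ⟨h1 i, fun j _ => h3 i j⟩
          · intro h
            exact ⟨fun i => (h i).1, hy, fun i j => (h i).2 j (Nat.zero_le _)⟩
        rw [← Finset.card_filter, hset, Fintype.card_piFinset]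
      · rw [if_neg (fun hmem => hy (Fintype.mem_piFinset.mp hmem))]
        apply Finset.sum_eq_zero
        intro r _
        rw [if_neg]
        rintro ⟨_, h2, _⟩
        exact hy h2
    calc (∑ y : Fin s → Fin N, ∑ r : Fin t → Fin M,
          if (∀ i, r i ∈ R i) ∧ (∀ j, y j ∈ S j) ∧ ∀ i j, A (r i) (y j) = C i j then 1 else 0)
        = ∑ y : Fin s → Fin N, if y ∈ Fintype.piFinset S then (∏ i, ((R i).filter fun r =>
            ∀ j : Fin s, 0 ≤ (j : ℕ) → A r (y j) = C i j).card) else 0 := by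
          exact Finset.sum_congr rfl (fun y _ => hinner y)
      _ = ∑ y ∈ Fintype.piFinset S, ∏ i, ((R i).filter fun r =>
            ∀ j : Fin s, 0 ≤ (j : ℕ) → A r (y j) = C i j).card := by
          rw [Finset.sum_ite_mem, Finset.univ_inter]
  rw [hcount]
  have hmprod : (∏ i, ((R i).card : ℝ)) = ∏ i, (m i : ℝ) :=
    Finset.prod_congr rfl (fun i _ => by rw [hm])
  rw [hmprod] at hmain
  calc (1 - (t : ℝ) * ε) ^ s * (∏ i, (m i : ℝ)) * (∏ j, (n' j : ℝ)) *
        (∏ i, ∏ j, (ρ i j - ε))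
      = (1 - (t : ℝ) * ε) ^ s * (∏ j, (n' j : ℝ)) * (∏ i, (m i : ℝ)) *
        (∏ i, ∏ j, (ρ i j - ε)) := by ring
    _ ≤ _ := hmain
end
end
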